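/- arXiv:2310.09527 — 2 statements merged into one kernel-verified Lean document; each statement's English description precedes it below -/
import Mathlib

section
/- (Abstract form of Lemma 4.2.) Let H be a complex Hilbert space, L : H → ℂ a continuous linear functional, and c ∈ ℝ, and define J : H → ℝ by J(v) = ‖v‖² − 2 Re(L v) + c. Let u ∈ H satisfy ⟪u, w⟫ = L w for all w ∈ H, let u₀ ∈ H with ‖u − u₀‖ > 0, and set ξ := u − u₀. Let 0 < τ < 1 and δ := (τ²/2)·‖u − u₀‖². Let S ⊆ H be a nonempty subset such that there exists ṽ ∈ S with ‖ξ − ṽ‖ < (τ/√2)·‖u − u₀‖. Then every quasi-minimizer ξ' ∈ S, i.e. every ξ' ∈ S with J(u₀ + ξ') ≤ (inf over v ∈ S of J(u₀ + v)) + δ, satisfies ‖ξ' − ξ‖ < τ·‖u − u₀‖. -/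
/-- abstract form of Lemma 4.2: With `J v = ‖v‖² − 2 Re (L v) + c`,
`u` the exact variational solution, `u₀` with `‖u − u₀‖ > 0`, `ξ = u − u₀`,
`0 < τ < 1`, `δ = (τ²/2)‖u − u₀‖²`, and `S ⊆ H` a nonempty subset containing some `v'`
with `‖ξ − v'‖ < (τ/√2)‖u − u₀‖`, every quasi-minimizer `ξ' ∈ S` of `v ↦ J (u₀ + v)`
with tolerance `δ` satisfies `‖ξ' − ξ‖ < τ‖u − u₀‖`. -/
theorem quasi_minimizer_error_bound
    {H : Type*} [NormedAddCommGroup H] [InnerProductSpace ℂ H] [CompleteSpace H]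
    (L : H →L[ℂ] ℂ) (c : ℝ) (J : H → ℝ)
    (hJ : ∀ v : H, J v = ‖v‖ ^ 2 - 2 * (L v).re + c)
    (u : H) (hu : ∀ w : H, (inner ℂ u w : ℂ) = L w)
    (u₀ : H) (hpos : ‖u - u₀‖ > 0) (ξ : H) (hξ : ξ = u - u₀)
    (τ : ℝ) (hτ0 : 0 < τ) (hτ1 : τ < 1)
    (δ : ℝ) (hδ : δ = τ ^ 2 / 2 * ‖u - u₀‖ ^ 2)
    (S : Set H) (hS : S.Nonempty)
    (happrox : ∃ v' ∈ S, ‖ξ - v'‖ < τ / Real.sqrt 2 * ‖u - u₀‖) :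
    ∀ ξ' ∈ S, J (u₀ + ξ') ≤ (⨅ v : S, J (u₀ + (v : H))) + δ →
      ‖ξ' - ξ‖ < τ * ‖u - u₀‖ := by
  -- Key identity: J (u₀ + v) = ‖v - ξ‖² + (c - ‖u‖²)
  have key : ∀ v : H, J (u₀ + v) = ‖v - ξ‖ ^ 2 + (c - ‖u‖ ^ 2) := by
    intro v
    have h1 : ‖v - ξ‖ ^ 2 = ‖(u₀ + v) - u‖ ^ 2 := by
      rw [hξ, show v - (u - u₀) = (u₀ + v) - u from by abel]
    have h2 : ‖(u₀ + v) - u‖ ^ 2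
        = ‖u₀ + v‖ ^ 2 - 2 * (inner ℂ (u₀ + v) u : ℂ).re + ‖u‖ ^ 2 :=
      @norm_sub_sq ℂ _ _ _ _ _ _
    have h3 : (inner ℂ (u₀ + v) u : ℂ).re = (L (u₀ + v)).re := by
      rw [← hu (u₀ + v), ← inner_conj_symm u (u₀ + v), Complex.conj_re]
    rw [hJ, h1, h2, h3]; ring
  rintro ξ' hξ'S hmin
  obtain ⟨v', hv'S, hv'⟩ := happrox
  -- infimum is bounded below
  have hbdd : BddBelow (Set.range fun v : S => J (u₀ + (v : H))) := by
    refine ⟨c - ‖u‖ ^ 2, ?_⟩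
    rintro x ⟨v, rfl⟩
    show c - ‖u‖ ^ 2 ≤ J (u₀ + (v : H))
    rw [key]
    nlinarith [sq_nonneg ‖(v : H) - ξ‖]
  have hinf : (⨅ v : S, J (u₀ + (v : H))) ≤ J (u₀ + v') :=
    ciInf_le hbdd ⟨v', hv'S⟩
  have hmain : J (u₀ + ξ') ≤ J (u₀ + v') + δ := le_trans hmin (by linarith)
  rw [key, key] at hmain
  have hsq : ‖ξ' - ξ‖ ^ 2 ≤ ‖v' - ξ‖ ^ 2 + δ := by linarith
  have hv'2 : ‖v' - ξ‖ ^ 2 < τ ^ 2 / 2 * ‖u - u₀‖ ^ 2 := by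
    have h2 : (0:ℝ) < Real.sqrt 2 := by positivity
    have := hv'
    rw [norm_sub_rev] at this
    have hb : (0:ℝ) ≤ τ / Real.sqrt 2 * ‖u - u₀‖ := by positivity
    have := mul_self_lt_mul_self (norm_nonneg _) this
    calc ‖v' - ξ‖ ^ 2 = ‖v' - ξ‖ * ‖v' - ξ‖ := sq ‖v' - ξ‖
      _ < (τ / Real.sqrt 2 * ‖u - u₀‖) * (τ / Real.sqrt 2 * ‖u - u₀‖) := this
      _ = τ ^ 2 / (Real.sqrt 2 * Real.sqrt 2) * ‖u - u₀‖ ^ 2 := by ring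
      _ = τ ^ 2 / 2 * ‖u - u₀‖ ^ 2 := by
          rw [Real.mul_self_sqrt (by norm_num)]
  have hlt : ‖ξ' - ξ‖ ^ 2 < (τ * ‖u - u₀‖) ^ 2 := by
    rw [hδ] at hsq; nlinarith
  exact lt_of_pow_lt_pow_left₀ 2 (by positivity) hlt
end

section
/- (Abstract form of Theorem 4.3 / Theorem 5.2.) Let H be a complex Hilbert space, L : H → ℂ a continuous linear functional, and c ∈ ℝ, and define J : H → ℝ by J(v) = ‖v‖² − 2 Re(L v) + c. Let u ∈ H satisfy ⟪u, w⟫ = L w for all w ∈ H. Let r ≥ 1, let u₀ ∈ H, and for j = 1, …, r let τ_j ∈ (0,1), let S_j ⊆ H be nonempty subsets, and define recursively u_j := u_{j−1} + ξ_j, where ξ_j ∈ S_j satisfies J(u_{j−1} + ξ_j) ≤ (inf over v ∈ S_j of J(u_{j−1} + v)) + δ_j with δ_j := (τ_j²/2)·‖u − u_{j−1}‖². Assume that for each j = 1, …, r, ‖u − u_{j−1}‖ > 0 and there exists ṽ_j ∈ S_j with ‖(u − u_{j−1}) − ṽ_j‖ < (τ_j/√2)·‖u − u_{j−1}‖. Then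 ‖u − u_r‖ < ‖u − u₀‖ · ∏_{j=1}^{r} τ_j. -/
/-- abstract form of Theorem 4.3 / Theorem 5.2: geometric convergence of the
recursive quasi-minimization scheme `uSeq j = uSeq (j−1) + ξ j`, where at each stage
`ξ j ∈ S j` is a quasi-minimizer of `v ↦ J (uSeq (j−1) + v)` on `S j` with tolerance
`δ j = (τ j ² / 2)‖u − uSeq (j−1)‖²`, and each `S j` contains an element within
`(τ j / √2)‖u − uSeq (j−1)‖` of the residual `u − uSeq (j−1)`. Then
`‖u − uSeq r‖ < ‖u − uSeq 0‖ ∏_{j=1}^{r} τ j`. -/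
theorem recursive_quasi_minimization_convergence
    {H : Type*} [NormedAddCommGroup H] [InnerProductSpace ℂ H] [CompleteSpace H]
    (L : H →L[ℂ] ℂ) (c : ℝ) (J : H → ℝ)
    (hJ : ∀ v : H, J v = ‖v‖ ^ 2 - 2 * (L v).re + c)
    (u : H) (hu : ∀ w : H, (inner ℂ u w : ℂ) = L w)
    (r : ℕ) (hr : 1 ≤ r)
    (τ : ℕ → ℝ) (S : ℕ → Set H) (ξ : ℕ → H) (uSeq : ℕ → H)
    (hτ : ∀ j, 1 ≤ j → j ≤ r → 0 < τ j ∧ τ j < 1)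
    (hSne : ∀ j, 1 ≤ j → j ≤ r → (S j).Nonempty)
    (hξS : ∀ j, 1 ≤ j → j ≤ r → ξ j ∈ S j)
    (hrec : ∀ j, 1 ≤ j → j ≤ r → uSeq j = uSeq (j - 1) + ξ j)
    (hquasi : ∀ j, 1 ≤ j → j ≤ r →
      J (uSeq (j - 1) + ξ j) ≤ (⨅ v : S j, J (uSeq (j - 1) + (v : H)))
        + τ j ^ 2 / 2 * ‖u - uSeq (j - 1)‖ ^ 2)
    (hpos : ∀ j, 1 ≤ j → j ≤ r → ‖u - uSeq (j - 1)‖ > 0)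
    (happrox : ∀ j, 1 ≤ j → j ≤ r →
      ∃ v' ∈ S j, ‖(u - uSeq (j - 1)) - v'‖ < τ j / Real.sqrt 2 * ‖u - uSeq (j - 1)‖) :
    ‖u - uSeq r‖ < ‖u - uSeq 0‖ * ∏ j ∈ Finset.Icc 1 r, τ j := by
  -- Key identity: J w = ‖w - u‖² + (c - ‖u‖²)
  have hJ' : ∀ w : H, J w = ‖w - u‖ ^ 2 + (c - ‖u‖ ^ 2) := by
    intro w
    have h1 : ‖w - u‖ ^ 2 = ‖w‖ ^ 2 - 2 * (inner ℂ w u : ℂ).re + ‖u‖ ^ 2 :=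
      @norm_sub_sq ℂ H _ _ _ w u
    have h2 : (L w).re = (inner ℂ w u : ℂ).re := by
      rw [← hu w, ← inner_conj_symm w u, Complex.conj_re]
    rw [hJ, h1, h2]; ring
  -- single step contraction
  have step : ∀ j, 1 ≤ j → j ≤ r → ‖u - uSeq j‖ < τ j * ‖u - uSeq (j - 1)‖ := by
    intro j hj1 hjr
    obtain ⟨hτ0, hτ1⟩ := hτ j hj1 hjr
    obtain ⟨v', hv'S, hv'⟩ := happrox j hj1 hjr
    have hd := hpos j hj1 hjr
    set d := ‖u - uSeq (j - 1)‖ with hdd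
    -- inf bound
    have hbdd : BddBelow (Set.range fun v : S j => J (uSeq (j - 1) + (v : H))) := by
      refine ⟨c - ‖u‖ ^ 2, ?_⟩
      rintro x ⟨v, rfl⟩
      show c - ‖u‖ ^ 2 ≤ J (uSeq (j - 1) + (v : H))
      rw [hJ']
      nlinarith [sq_nonneg ‖uSeq (j - 1) + (v : H) - u‖]
    have hinf : (⨅ v : S j, J (uSeq (j - 1) + (v : H))) ≤ J (uSeq (j - 1) + v') :=
      ciInf_le hbdd (⟨v', hv'S⟩ : S j)
    have hquasij := hquasi j hj1 hjr
    have hJv' : J (uSeq (j - 1) + v') = ‖(u - uSeq (j - 1)) - v'‖ ^ 2 + (c - ‖u‖ ^ 2) := by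
      rw [hJ']
      congr 2
      rw [← norm_neg]
      congr 1
      abel
    have hJξ : J (uSeq (j - 1) + ξ j) = ‖u - uSeq j‖ ^ 2 + (c - ‖u‖ ^ 2) := by
      rw [hJ', hrec j hj1 hjr, ← norm_neg]
      congr 1
      abel
    -- v' bound squared
    have hv'sq : ‖(u - uSeq (j - 1)) - v'‖ ^ 2 < τ j ^ 2 / 2 * d ^ 2 := by
      have h2 : (0:ℝ) < Real.sqrt 2 := by positivity
      have hrhs : (τ j / Real.sqrt 2 * d) ^ 2 = τ j ^ 2 / 2 * d ^ 2 := by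
        rw [mul_pow, div_pow, Real.sq_sqrt (by norm_num : (2:ℝ) ≥ 0)]
      have hpos2 : 0 < τ j / Real.sqrt 2 * d := by positivity
      have := sq_lt_sq' (by linarith [norm_nonneg ((u - uSeq (j - 1)) - v')]) hv'
      rw [hrhs] at this
      exact this
    have hsq : ‖u - uSeq j‖ ^ 2 < (τ j * d) ^ 2 := by
      rw [hJξ] at hquasij
      rw [hJv'] at hinf
      nlinarith
    exact lt_of_pow_lt_pow_left₀ 2 (by positivity) hsq
  -- induction
  have main : ∀ n, 1 ≤ n → n ≤ r →
      ‖u - uSeq n‖ < ‖u - uSeq 0‖ * ∏ j ∈ Finset.Icc 1 n, τ j := by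
    intro n hn
    induction n, hn using Nat.le_induction with
    | base =>
      intro h1r
      simpa [mul_comm] using step 1 le_rfl h1r
    | succ n hn ih =>
      intro hnr
      have hnr' : n ≤ r := le_trans (Nat.le_succ n) hnr
      have hs := step (n + 1) (by omega) hnr
      simp only [Nat.add_sub_cancel] at hs
      have ihn := ih hnr'
      obtain ⟨hτ0, _⟩ := hτ (n + 1) (by omega) hnr
      have hprod : ∏ j ∈ Finset.Icc 1 (n + 1), τ j
          = (∏ j ∈ Finset.Icc 1 n, τ j) * τ (n + 1) := by
        rw [Finset.prod_Icc_succ_top (by omega)]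
      rw [hprod]
      calc ‖u - uSeq (n + 1)‖ < τ (n + 1) * ‖u - uSeq n‖ := hs
        _ < τ (n + 1) * (‖u - uSeq 0‖ * ∏ j ∈ Finset.Icc 1 n, τ j) := by
            exact mul_lt_mul_of_pos_left ihn hτ0
        _ = ‖u - uSeq 0‖ * ((∏ j ∈ Finset.Icc 1 n, τ j) * τ (n + 1)) := by ring
  exact main r hr le_rfl
end
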